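/- Let n ≥ 1, let (P_k)_{k≥0} be a harmonic sequence of polynomials, and let f be n-times differentiable on an open interval containing [a,b] with f^(n) absolutely continuous and essentially bounded on [a,b]. Then for every x ∈ [a,(a+b)/2], | (1/n)·( (f(x)+f(a+b−x))/2 + Σ_{k=1}^{n−1} ( T_k(x) + F̃_k(a,b) ) ) − (1/(b−a))·∫_a^b f(y) dy | ≤ (1/(n·(b−a)))·( ∫_a^b |P_{n−1}(t)|·|S(t,x)| dt )·‖f^(n)‖_{L^∞[a,b]}. -/

import Mathlib

open MeasureTheory Set

/-- The Guessab–Schmeisser / Fink-type kernel `S(t,x)` on `[a,b]`. -/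
noncomputable def Skernel (a b x t : ℝ) : ℝ :=
  if t ≤ x then t - a else if t < a + b - x then t - (a + b) / 2 else t - b

/-- `g` is absolutely continuous on `[a,b]`. -/
def AbsCont (g : ℝ → ℝ) (a b : ℝ) : Prop :=
  ∃ h : ℝ → ℝ, IntervalIntegrable h MeasureTheory.volume a b ∧
    ∀ t ∈ Set.Icc a b, g t = g a + ∫ s in a..t, h s

/-- A harmonic sequence of polynomials: `P 0 = 1` and `(P (k+1))' = P k`. -/
def HarmonicSeq (P : ℕ → Polynomial ℝ) : Prop :=
  P 0 = 1 ∧ ∀ k, (P (k + 1)).derivative = P k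

/-- The term `T_k(x)` of the harmonic-sequence expansion. -/
noncomputable def Tterm (P : ℕ → Polynomial ℝ) (f : ℝ → ℝ) (a b x : ℝ) (k : ℕ) : ℝ :=
  ((-1 : ℝ) ^ k / 2) *
    ((P k).eval x * iteratedDeriv k f x +
      (P k).eval (a + b - x) * iteratedDeriv k f (a + b - x))

/-- The term `F̃_k(a,b)` of the harmonic-sequence expansion. -/
noncomputable def Ftilde (P : ℕ → Polynomial ℝ) (f : ℝ → ℝ) (n : ℕ) (a b : ℝ) (k : ℕ) : ℝ :=
  ((-1 : ℝ) ^ k * ((n : ℝ) - k) / (b - a)) *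
    ((P k).eval a * iteratedDeriv (k - 1) f a - (P k).eval b * iteratedDeriv (k - 1) f b)

/-- The essential supremum of `|g|` on `[a,b]` (the `L^∞[a,b]` norm). -/
noncomputable def essSupAbs (g : ℝ → ℝ) (a b : ℝ) : ℝ :=
  essSup (fun t => |g t|) (MeasureTheory.volume.restrict (Set.Icc a b))

/-!
On each of the three intervals `[a, x]`, `[x, a + b - x]`, `[a + b - x, b]` the kernel is
`S(t, x) = t - c` for a constant `c`. The polynomials `C_j = kernelPoly P n c j`, `C₀ = n`,
`C_{j+1} = P_j · (X - c) + (n - j - 1) · P_{j+1}` satisfy `C_{j+1}' = C_j` and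
`C_n = P_{n-1} · (X - c)`, so `n`-fold integration by parts turns `∫ P_{n-1} (t - c) f⁽ⁿ⁾` into
`± (n ∫ f - boundary terms)`. Summed over the three pieces, the jumps of `c` by `(b - a) / 2` at
`x` and `a + b - x` produce the terms `T_k`, and the endpoints `a`, `b` produce `F̃_k`. The bound
is then Hölder's inequality for `L¹ × L^∞`.
-/
section IteratedDeriv

variable {f : ℝ → ℝ} {n : ℕ} {s : Set ℝ}

lemma ContDiffOn.continuousOn_iteratedDeriv_of_isOpen (hf : ContDiffOn ℝ (n : ℕ∞) f s)
    (hs : IsOpen s) {k : ℕ} (hk : k ≤ n) : ContinuousOn (iteratedDeriv k f) s :=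
  (hf.continuousOn_iteratedDerivWithin (by exact_mod_cast hk) hs.uniqueDiffOn).congr
    (iteratedDerivWithin_of_isOpen hs).symm

lemma ContDiffOn.hasDerivAt_iteratedDeriv (hf : ContDiffOn ℝ (n : ℕ∞) f s) (hs : IsOpen s)
    {k : ℕ} (hk : k < n) {t : ℝ} (ht : t ∈ s) :
    HasDerivAt (iteratedDeriv k f) (iteratedDeriv (k + 1) f t) t := by
  have hd : DifferentiableOn ℝ (iteratedDeriv k f) s :=
    (hf.differentiableOn_iteratedDerivWithin (by exact_mod_cast hk) hs.uniqueDiffOn).congr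
      (iteratedDerivWithin_of_isOpen hs).symm
  rw [iteratedDeriv_succ]
  exact (hd.differentiableAt (hs.mem_nhds ht)).hasDerivAt

end IteratedDeriv

theorem intervalIntegral.integral_mul_by_parts_iterate {u g : ℕ → ℝ → ℝ} {α β : ℝ} (n : ℕ)
    (hu : ∀ k < n, ∀ t ∈ uIcc α β, HasDerivAt (u (k + 1)) (u k t) t)
    (hg : ∀ k < n, ∀ t ∈ uIcc α β, HasDerivAt (g k) (g (k + 1) t) t)
    (huc : ∀ k ≤ n, ContinuousOn (u k) (uIcc α β))
    (hgc : ∀ k ≤ n, ContinuousOn (g k) (uIcc α β)) :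
    (-1) ^ n * ∫ t in α..β, u n t * g n t =
      (∫ t in α..β, u 0 t * g 0 t) -
        ∑ i ∈ Finset.range n, (-1) ^ i * (u (i + 1) β * g i β - u (i + 1) α * g i α) := by
  induction n with
  | zero => simp
  | succ n ih =>
    have hparts := integral_mul_deriv_eq_deriv_mul (hu n n.lt_succ_self) (hg n n.lt_succ_self)
      ((huc n n.le_succ).intervalIntegrable) ((hgc (n + 1) le_rfl).intervalIntegrable)
    have ih' := ih (fun k hk => hu k (hk.trans n.lt_succ_self))
      (fun k hk => hg k (hk.trans n.lt_succ_self)) (fun k hk => huc k (hk.trans n.le_succ))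
      (fun k hk => hgc k (hk.trans n.le_succ))
    rw [hparts, Finset.sum_range_succ]
    linear_combination ih'

section KernelPoly

open Polynomial

noncomputable def kernelPoly (P : ℕ → ℝ[X]) (n : ℕ) (c : ℝ) : ℕ → ℝ[X]
  | 0 => C (n : ℝ)
  | j + 1 => P j * (X - C c) + C ((n : ℝ) - (j + 1)) * P (j + 1)

variable {P : ℕ → ℝ[X]} {n : ℕ} {c : ℝ}

lemma HarmonicSeq.derivative_kernelPoly (hP : HarmonicSeq P) (j : ℕ) :
    derivative (kernelPoly P n c (j + 1)) = kernelPoly P n c j := by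
  cases j with
  | zero => simp [kernelPoly, hP.1, hP.2 0]
  | succ j =>
    simp only [kernelPoly, derivative_add, derivative_mul, hP.2, derivative_C, derivative_X,
      derivative_sub]
    push_cast
    simp only [C_sub, C_add, C_1]
    ring

lemma kernelPoly_eval_succ (t : ℝ) (j : ℕ) :
    (kernelPoly P n c (j + 1)).eval t =
      (P j).eval t * (t - c) + (n - (j + 1)) * (P (j + 1)).eval t := by
  simp [kernelPoly]

end KernelPoly

section Kernel

variable {a b x : ℝ}

lemma Skernel_eqOn_Ioo_left : EqOn (Skernel a b x) (· - a) (Ioo a x) :=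
  fun _ ht => if_pos ht.2.le

lemma Skernel_eqOn_Ioo_mid : EqOn (Skernel a b x) (· - (a + b) / 2) (Ioo x (a + b - x)) :=
  fun _ ht => by simp [Skernel, not_le.2 ht.1, ht.2]

lemma Skernel_eqOn_Ioo_right (hx : x ≤ (a + b) / 2) :
    EqOn (Skernel a b x) (· - b) (Ioo (a + b - x) b) :=
  fun t ht => by
    have htx : ¬ t ≤ x := by linarith [ht.1]
    simp [Skernel, htx, ht.1.le]

lemma intervalIntegrable_mul_Skernel {p : ℝ → ℝ} (hp : ContinuousOn p (Icc a b))
    (hx : x ∈ Icc a ((a + b) / 2)) :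
    IntervalIntegrable (fun t => p t * Skernel a b x t) volume a b := by
  obtain ⟨hax, hxm⟩ := hx
  have piece : ∀ {α β c : ℝ}, a ≤ α → α ≤ β → β ≤ b → EqOn (Skernel a b x) (· - c) (Ioo α β) →
      IntervalIntegrable (fun t => p t * Skernel a b x t) volume α β := by
    intro α β c haα hαβ hβb hS
    have hcont : ContinuousOn (fun t => p t * (t - c)) (uIcc α β) :=
      (hp.mono (uIcc_of_le hαβ ▸ Icc_subset_Icc haα hβb)).mul (continuous_sub_right c).continuousOn
    refine hcont.intervalIntegrable.congr_uIoo fun t ht => ?_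
    rw [uIoo_of_le hαβ] at ht
    simp [hS ht]
  exact ((piece le_rfl hax (by linarith) Skernel_eqOn_Ioo_left).trans
    (piece hax (by linarith) (by linarith) Skernel_eqOn_Ioo_mid)).trans
    (piece (by linarith) (by linarith) le_rfl (Skernel_eqOn_Ioo_right hxm))

lemma integral_mul_Skernel_mul {p g : ℝ → ℝ} (hp : ContinuousOn p (Icc a b))
    (hg : ContinuousOn g (Icc a b)) (hx : x ∈ Icc a ((a + b) / 2)) :
    ∫ t in a..b, p t * Skernel a b x t * g t =
      (∫ t in a..x, p t * (t - a) * g t) + (∫ t in x..a + b - x, p t * (t - (a + b) / 2) * g t) +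
        ∫ t in a + b - x..b, p t * (t - b) * g t := by
  obtain ⟨hax, hxm⟩ := hx
  have hab : a ≤ b := by linarith
  have hint := (intervalIntegrable_mul_Skernel hp ⟨hax, hxm⟩).mul_continuousOn
    (uIcc_of_le hab ▸ hg)
  have mem : ∀ {t : ℝ}, a ≤ t → t ≤ b → t ∈ uIcc a b := fun h1 h2 => uIcc_of_le hab ▸ ⟨h1, h2⟩
  have hy : a + b - x ∈ uIcc a b := mem (by linarith) (by linarith)
  have hint₁ := hint.mono_set (uIcc_subset_uIcc (mem le_rfl hab) (mem hax (by linarith)))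
  have hint₂ := hint.mono_set (uIcc_subset_uIcc (mem hax (by linarith)) hy)
  have hint₃ := hint.mono_set (uIcc_subset_uIcc hy (mem hab le_rfl))
  rw [← intervalIntegral.integral_add_adjacent_intervals (hint₁.trans hint₂) hint₃,
    ← intervalIntegral.integral_add_adjacent_intervals hint₁ hint₂]
  congr 1
  congr 1
  all_goals refine intervalIntegral.integral_congr_Ioo_of_le (by linarith) fun t ht => ?_
  · simp [Skernel_eqOn_Ioo_left ht]
  · simp [Skernel_eqOn_Ioo_mid ht]
  · simp [Skernel_eqOn_Ioo_right hxm ht]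

lemma abs_integral_mul_le_integral_abs_mul_essSupAbs {φ g : ℝ → ℝ} (hab : a ≤ b)
    (hφ : IntervalIntegrable φ volume a b) (hg : ContinuousOn g (Icc a b)) :
    |∫ t in a..b, φ t * g t| ≤ (∫ t in a..b, |φ t|) * essSupAbs g a b := by
  obtain ⟨C, hC⟩ := isCompact_Icc.exists_bound_of_continuousOn hg
  have hle : ∀ᵐ t ∂volume.restrict (Icc a b), |g t| ≤ essSupAbs g a b :=
    ae_le_essSup ⟨C, Filter.eventually_map.2 ((ae_restrict_iff' measurableSet_Icc).2
      (.of_forall hC))⟩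
  calc |∫ t in a..b, φ t * g t|
      ≤ ∫ t in a..b, |φ t * g t| := intervalIntegral.abs_integral_le_integral_abs hab
    _ ≤ ∫ t in a..b, |φ t| * essSupAbs g a b := by
      refine intervalIntegral.integral_mono_ae_restrict hab
        (hφ.mul_continuousOn (uIcc_of_le hab ▸ hg)).abs (hφ.abs.mul_const _) ?_
      filter_upwards [hle] with t ht
      rw [abs_mul]
      exact mul_le_mul_of_nonneg_left ht (abs_nonneg _)
    _ = (∫ t in a..b, |φ t|) * essSupAbs g a b := intervalIntegral.integral_mul_const _ _

end Kernel

section Expansion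

variable {P : ℕ → Polynomial ℝ} {f : ℝ → ℝ} {m : ℕ}

theorem integral_eval_mul_sub_mul_iteratedDeriv (hP : HarmonicSeq P) {s : Set ℝ} (hs : IsOpen s)
    (hf : ContDiffOn ℝ ((m + 1 : ℕ) : ℕ∞) f s) {α β : ℝ} (hαβ : uIcc α β ⊆ s) (c : ℝ) :
    (-1) ^ (m + 1) * ∫ t in α..β, (P m).eval t * (t - c) * iteratedDeriv (m + 1) f t =
      ((m : ℝ) + 1) * (∫ t in α..β, f t) -
        ∑ i ∈ Finset.range (m + 1), (-1) ^ i *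
          ((kernelPoly P (m + 1) c (i + 1)).eval β * iteratedDeriv i f β -
            (kernelPoly P (m + 1) c (i + 1)).eval α * iteratedDeriv i f α) := by
  have hparts := intervalIntegral.integral_mul_by_parts_iterate (m + 1)
    (u := fun k t => (kernelPoly P (m + 1) c k).eval t) (g := fun k => iteratedDeriv k f)
    (fun k _ t _ => by
      simpa only [hP.derivative_kernelPoly] using (kernelPoly P (m + 1) c (k + 1)).hasDerivAt t)
    (fun _ hk _ ht => hf.hasDerivAt_iteratedDeriv hs hk (hαβ ht))
    (fun _ _ => (Polynomial.continuous _).continuousOn)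
    (fun _ hk => (hf.continuousOn_iteratedDeriv_of_isOpen hs hk).mono hαβ)
  have hu₀ : ∀ t, (kernelPoly P (m + 1) c 0).eval t = (m : ℝ) + 1 := by simp [kernelPoly]
  have hu : ∀ t, (kernelPoly P (m + 1) c (m + 1)).eval t = (P m).eval t * (t - c) := by
    simp [kernelPoly_eval_succ]
  simpa only [hu₀, hu, iteratedDeriv_zero, intervalIntegral.integral_const_mul] using hparts

lemma kernelPoly_boundary_eq (a b x : ℝ) (hba : b - a ≠ 0) (i : ℕ) :
    (-1) ^ i * ((kernelPoly P (m + 1) a (i + 1)).eval x * iteratedDeriv i f x -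
        (kernelPoly P (m + 1) a (i + 1)).eval a * iteratedDeriv i f a) +
      (-1) ^ i * ((kernelPoly P (m + 1) ((a + b) / 2) (i + 1)).eval (a + b - x) *
          iteratedDeriv i f (a + b - x) -
        (kernelPoly P (m + 1) ((a + b) / 2) (i + 1)).eval x * iteratedDeriv i f x) +
      (-1) ^ i * ((kernelPoly P (m + 1) b (i + 1)).eval b * iteratedDeriv i f b -
        (kernelPoly P (m + 1) b (i + 1)).eval (a + b - x) * iteratedDeriv i f (a + b - x)) =
    (b - a) * (Tterm P f a b x i + Ftilde P f (m + 1) a b (i + 1)) := by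
  simp only [kernelPoly_eval_succ, Tterm, Ftilde, Nat.add_sub_cancel]
  push_cast
  field_simp
  ring

lemma sum_range_Tterm_add_Ftilde (hP₀ : P 0 = 1) (a b x : ℝ) :
    ∑ i ∈ Finset.range (m + 1), (Tterm P f a b x i + Ftilde P f (m + 1) a b (i + 1)) =
      (f x + f (a + b - x)) / 2 +
        ∑ k ∈ Finset.Icc 1 m, (Tterm P f a b x k + Ftilde P f (m + 1) a b k) := by
  have hT₀ : Tterm P f a b x 0 = (f x + f (a + b - x)) / 2 := by
    simp only [Tterm, pow_zero, one_div, hP₀, Polynomial.eval_one, iteratedDeriv_zero, one_mul]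
    ring
  have hF : Ftilde P f (m + 1) a b (m + 1) = 0 := by simp [Ftilde]
  have hIcc : ∀ φ : ℕ → ℝ, ∑ k ∈ Finset.Icc 1 m, φ k = ∑ i ∈ Finset.range m, φ (i + 1) := by
    intro φ
    rw [← Finset.Ico_add_one_right_eq_Icc, Finset.sum_Ico_eq_sum_range]
    simp [add_comm]
  rw [Finset.sum_add_distrib, Finset.sum_range_succ', Finset.sum_range_succ, hT₀, hF, hIcc,
    Finset.sum_add_distrib]
  ring

end Expansion

theorem integral_eval_mul_Skernel_mul_iteratedDeriv {P : ℕ → Polynomial ℝ} (hP : HarmonicSeq P)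
    {m : ℕ} {a b x : ℝ} (hab : a < b) (hx : x ∈ Icc a ((a + b) / 2)) {f : ℝ → ℝ} {s : Set ℝ}
    (hs : IsOpen s) (hf : ContDiffOn ℝ ((m + 1 : ℕ) : ℕ∞) f s) (hsub : Icc a b ⊆ s) :
    (-1) ^ (m + 1) * ∫ t in a..b, (P m).eval t * Skernel a b x t * iteratedDeriv (m + 1) f t =
      ((m : ℝ) + 1) * (∫ t in a..b, f t) - (b - a) * ((f x + f (a + b - x)) / 2 +
        ∑ k ∈ Finset.Icc 1 m, (Tterm P f a b x k + Ftilde P f (m + 1) a b k)) := by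
  obtain ⟨hax, hxm⟩ := hx
  have hsub' : ∀ {α β : ℝ}, a ≤ α → α ≤ β → β ≤ b → uIcc α β ⊆ s := fun haα hαβ hβb =>
    (uIcc_of_le hαβ ▸ Icc_subset_Icc haα hβb).trans hsub
  have hfc := (hf.continuousOn_iteratedDeriv_of_isOpen hs (Nat.zero_le _)).mono hsub
  rw [iteratedDeriv_zero] at hfc
  have hf_split : (∫ t in a..x, f t) + (∫ t in x..a + b - x, f t) + ∫ t in a + b - x..b, f t =
      ∫ t in a..b, f t := by
    have hint : ∀ {α β : ℝ}, a ≤ α → α ≤ β → β ≤ b → IntervalIntegrable f volume α β :=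
      fun haα hαβ hβb => (hfc.mono (uIcc_of_le hαβ ▸ Icc_subset_Icc haα hβb)).intervalIntegrable
    rw [intervalIntegral.integral_add_adjacent_intervals (hint le_rfl hax (by linarith))
        (hint hax (by linarith) (by linarith)),
      intervalIntegral.integral_add_adjacent_intervals (hint le_rfl (by linarith) (by linarith))
        (hint (by linarith) (by linarith) le_rfl)]
  rw [integral_mul_Skernel_mul (P m).continuous.continuousOn
      ((hf.continuousOn_iteratedDeriv_of_isOpen hs le_rfl).mono hsub) ⟨hax, hxm⟩,
    mul_add, mul_add,
    integral_eval_mul_sub_mul_iteratedDeriv hP hs hf (hsub' le_rfl hax (by linarith)),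
    integral_eval_mul_sub_mul_iteratedDeriv hP hs hf (hsub' hax (by linarith) (by linarith)),
    integral_eval_mul_sub_mul_iteratedDeriv hP hs hf (hsub' (by linarith) (by linarith) le_rfl),
    ← sum_range_Tterm_add_Ftilde hP.1, Finset.mul_sum, ← hf_split,
    ← Finset.sum_congr rfl fun i _ => kernelPoly_boundary_eq a b x (sub_ne_zero.2 hab.ne') i,
    Finset.sum_add_distrib, Finset.sum_add_distrib]
  ring

theorem stmt_14_general (n : ℕ) (hn : 1 ≤ n) (P : ℕ → Polynomial ℝ) (hP : HarmonicSeq P)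
    (a b c d : ℝ) (hab : a < b) (hca : c < a) (hbd : b < d) (f : ℝ → ℝ)
    (hf : ContDiffOn ℝ (n : ℕ∞) f (Set.Ioo c d))
    (x : ℝ) (hx : x ∈ Set.Icc a ((a + b) / 2)) :
    |(1 / (n : ℝ)) *
          ((f x + f (a + b - x)) / 2 +
            ∑ k ∈ Finset.Icc 1 (n - 1), (Tterm P f a b x k + Ftilde P f n a b k))
        - (1 / (b - a)) * ∫ y in a..b, f y|
      ≤ (1 / ((n : ℝ) * (b - a))) *
          (∫ t in a..b, |(P (n - 1)).eval t| * |Skernel a b x t|) *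
          essSupAbs (iteratedDeriv n f) a b := by
  obtain ⟨m, rfl⟩ : ∃ m, n = m + 1 := ⟨n - 1, by omega⟩
  have hsub : Icc a b ⊆ Ioo c d := Icc_subset_Ioo hca hbd
  have hidentity := integral_eval_mul_Skernel_mul_iteratedDeriv hP hab hx isOpen_Ioo hf hsub
  have hestimate := abs_integral_mul_le_integral_abs_mul_essSupAbs hab.le
    (intervalIntegrable_mul_Skernel (P m).continuous.continuousOn hx)
    ((hf.continuousOn_iteratedDeriv_of_isOpen isOpen_Ioo le_rfl).mono hsub)
  simp only [abs_mul] at hestimate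
  have hN : (0 : ℝ) < ((m : ℝ) + 1) * (b - a) := mul_pos (by positivity) (sub_pos.2 hab)
  simp only [Nat.add_sub_cancel, Nat.cast_add, Nat.cast_one]
  set J := ∫ t in a..b, (P m).eval t * Skernel a b x t * iteratedDeriv (m + 1) f t
  set W := (f x + f (a + b - x)) / 2 +
    ∑ k ∈ Finset.Icc 1 m, (Tterm P f a b x k + Ftilde P f (m + 1) a b k)
  have hJ : 1 / ((m : ℝ) + 1) * W - 1 / (b - a) * ∫ y in a..b, f y =
      (-1) ^ m * J / (((m : ℝ) + 1) * (b - a)) := by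
    have hba : b - a ≠ 0 := sub_ne_zero.2 hab.ne'
    field_simp
    linear_combination hidentity
  rw [hJ, abs_div, abs_mul, abs_pow, abs_neg, abs_one, one_pow, one_mul, abs_of_pos hN,
    mul_assoc, one_div_mul_eq_div]
  exact div_le_div_of_nonneg_right hestimate hN.le

theorem stmt_14 (n : ℕ) (hn : 1 ≤ n) (P : ℕ → Polynomial ℝ) (hP : HarmonicSeq P)
    (a b c d : ℝ) (hab : a < b) (hca : c < a) (hbd : b < d) (f : ℝ → ℝ)
    (hf : ContDiffOn ℝ (n : ℕ∞) f (Set.Ioo c d))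
    (hAC : AbsCont (iteratedDeriv n f) a b)
    (hbdd : ∃ C : ℝ, ∀ᵐ t ∂(MeasureTheory.volume.restrict (Set.Icc a b)),
      |iteratedDeriv n f t| ≤ C)
    (x : ℝ) (hx : x ∈ Set.Icc a ((a + b) / 2)) :
    |(1 / (n : ℝ)) *
          ((f x + f (a + b - x)) / 2 +
            ∑ k ∈ Finset.Icc 1 (n - 1), (Tterm P f a b x k + Ftilde P f n a b k))
        - (1 / (b - a)) * ∫ y in a..b, f y|
      ≤ (1 / ((n : ℝ) * (b - a))) *
          (∫ t in a..b, |(P (n - 1)).eval t| * |Skernel a b x t|) *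
          essSupAbs (iteratedDeriv n f) a b :=
  stmt_14_general n hn P hP a b c d hab hca hbd f hf x hx
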